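/- Let p be a prime and M = Z[s₀, s₁] the free abelian group on two generators. For each n ≥ 1 let σ denote the cyclic permutation of order p^n acting on M^{⊗p^n}. Then there exist elements c_i ∈ M^{⊗p^i} for i ≥ 1 such that for every n ≥ 1: (s₀+s₁)^{⊗p^n} = s₀^{⊗p^n} + s₁^{⊗p^n} + Σ_{i=1}^{n} Σ_{j=0}^{p^i − 1} σ^j(c_i^{⊗p^{n−i}}) in M^{⊗p^n}. -/

import Mathlib

/-- Words of length `N` in the two letters `s₀, s₁`, i.e. the canonical basis of the `p^·`-fold
tensor power `M^{⊗N}` of the free abelian group `M = Z[s₀,s₁]`; elements of `M^{⊗N}` are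
represented as formal `ℤ`-linear combinations of words. -/
abbrev tensorPowerOfRankTwo (N : ℕ) : Type := (ZMod N → Fin 2) →₀ ℤ

/-- The cyclic rotation `σ^j` of the tensor factors of `M^{⊗p^n}`, in the word model:
the linear extension of rotating each word by `j`. -/
noncomputable def cyclicRotate (N : ℕ) (j : ℕ) :
    tensorPowerOfRankTwo N → tensorPowerOfRankTwo N :=
  Finsupp.mapDomain fun w : ZMod N → Fin 2 => fun x => w (x + (j : ZMod N))

/-- The `p^{n-i}`-fold tensor power map `M^{⊗p^i} → (M^{⊗p^i})^{⊗p^{n-i}} = M^{⊗p^n}`,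
`c ↦ c^{⊗p^{n−i}}`, in the word model: blocks of length `p^i` are concatenated, block `l`
of the word being the word at position `l` of the chosen tuple, and coefficients multiply. -/
noncomputable def tensorPow (p i n : ℕ) [NeZero (p ^ i)] [NeZero (p ^ (n - i))]
    (c : tensorPowerOfRankTwo (p ^ i)) : tensorPowerOfRankTwo (p ^ n) :=
  ∑ g : ZMod (p ^ (n - i)) → (ZMod (p ^ i) → Fin 2),
    (∏ j : ZMod (p ^ (n - i)), c (g j)) •
      Finsupp.single
        (fun x : ZMod (p ^ n) =>
          g (((x.val / p ^ i : ℕ) : ZMod (p ^ (n - i)))) (((x.val : ℕ) : ZMod (p ^ i))))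
        (1 : ℤ)

/-!
Compare coefficients word by word and choose the `c_n` recursively. Given `c_1, …, c_{n-1}`, the
identity at level `n` asks for `∑ s : ZMod (p ^ n), c_n (s +ᵥ u) = D_n u`, where the defect `D_n`
is what the constant words and `c_1, …, c_{n-1}` leave over. `D_n` is rotation invariant, so such
a `c_n` exists as soon as the stabilizer of every word `u` divides `D_n u`. If the stabilizer is
`⟨p ^ k⟩`, of order `p ^ (n - k)`, then `u` is the periodic extension of a word `v` of length
`p ^ k`. Subtracting the identity at level `n - 1` for the extension of `v` turns `D_n u` into a
sum of terms `a ^ p ^ r - a ^ p ^ (r + 1)`, each divisible by `p ^ (r + 1)`, with an extra factor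
`p ^ (i - k)` from the `p ^ k`-periodicity in the rotation index when `i > k`.
-/

open Finset Function

-- `(s +ᵥ u) x = u (-s + x)`, so `cyclicRotate N j X` has coefficient `X (j +ᵥ u)` at `u`.
attribute [local instance] arrowAddAction

theorem ZMod.sum_range_natCast {M : Type*} [AddCommMonoid M] (d : ℕ) [NeZero d]
    (f : ZMod d → M) : ∑ j ∈ range d, f j = ∑ x, f x :=
  sum_nbij' (↑) ZMod.val (by simp) (by simp [ZMod.val_lt])
    (fun _ hj => ZMod.val_cast_of_lt (mem_range.1 hj)) (fun x _ => ZMod.natCast_zmod_val x)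
    (fun _ _ => rfl)

theorem Function.Periodic.sum_range_add {M : Type*} [AddCommMonoid M] {g : ℕ → M} {d : ℕ}
    (hg : Periodic g d) (t : ℕ) : ∑ j ∈ range d, g (j + t) = ∑ j ∈ range d, g j := by
  rcases d.eq_zero_or_pos with rfl | hd
  · simp
  have : NeZero d := ⟨hd.ne'⟩
  have hG : ∀ j : ℕ, g j = g (j : ZMod d).val := fun j => by
    rw [ZMod.val_natCast, hg.map_mod_nat]
  calc ∑ j ∈ range d, g (j + t) = ∑ j ∈ range d, g ((j : ZMod d) + t).val := by
        simp only [← Nat.cast_add, ← hG]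
    _ = ∑ x : ZMod d, g (x + t).val := ZMod.sum_range_natCast d fun x => g (x + t).val
    _ = ∑ x : ZMod d, g x.val := Equiv.sum_comp (Equiv.addRight (t : ZMod d)) (fun x => g x.val)
    _ = ∑ j ∈ range d, g j := by
        rw [← ZMod.sum_range_natCast d]; simp only [← hG]

theorem Function.Periodic.sum_range_mul {M : Type*} [AddCommMonoid M] {g : ℕ → M} {d : ℕ}
    (hg : Periodic g d) (a : ℕ) : ∑ j ∈ range (a * d), g j = a • ∑ j ∈ range d, g j := by
  induction a with
  | zero => simp
  | succ a ih =>
    rw [add_mul, one_mul, Finset.sum_range_add, ih, succ_nsmul]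
    congr 1
    exact sum_congr rfl fun j _ => by simpa [add_comm] using hg.nat_mul a j

theorem ZMod.prod_comp_castHom {M : Type*} [CommMonoid M] {a N : ℕ} [NeZero a] [NeZero N]
    (h : a ∣ N) (f : ZMod a → M) :
    ∏ x : ZMod N, f (ZMod.castHom h (ZMod a) x) = (∏ y, f y) ^ (N / a) := by
  classical
  set φ := ZMod.castHom h (ZMod a)
  have hfiber : ∀ y, #{x | φ x = y} = #{x | φ x = 0} := fun y =>
    AddMonoidHom.card_fiber_eq_of_mem_range φ (ZMod.castHom_surjective h y) ⟨0, map_zero φ⟩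
  have hN : N / a = #{x | φ x = 0} := by
    refine Nat.div_eq_of_eq_mul_right (Nat.pos_of_neZero a) ?_
    simpa [hfiber, ZMod.card, mul_comm] using
      card_eq_sum_card_fiberwise (f := φ) (s := univ) (t := univ) (by simp)
  rw [← prod_fiberwise univ φ, ← prod_pow]
  refine prod_congr rfl fun y _ => ?_
  rw [prod_congr rfl fun x hx => by rw [(mem_filter.1 hx).2], prod_const, hfiber, hN]

theorem Int.prime_pow_succ_dvd_pow_sub_pow {p : ℕ} (hp : p.Prime) (a : ℤ) (r : ℕ) :
    (p : ℤ) ^ (r + 1) ∣ a ^ p ^ r - a ^ p ^ (r + 1) := by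
  have := dvd_sub_pow_of_dvd_sub (Int.prime_dvd_pow_self_sub hp a) r
  rwa [← pow_mul, ← pow_succ', dvd_sub_comm] at this

theorem AddSubgroup.exists_prime_pow_mem_card_eq {p n : ℕ} (hp : p.Prime)
    (H : AddSubgroup (ZMod (p ^ n))) :
    ∃ k ≤ n, ((p ^ k : ℕ) : ZMod (p ^ n)) ∈ H ∧ Nat.card H = p ^ (n - k) := by
  classical
  have : NeZero (p ^ n) := ⟨pow_ne_zero n hp.ne_zero⟩
  obtain ⟨t, ht, hcard⟩ := (Nat.dvd_prime_pow hp).1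
    (show Nat.card H ∣ p ^ n by simpa using H.card_addSubgroup_dvd_card)
  refine ⟨n - t, n.sub_le t, ?_, by rw [hcard, Nat.sub_sub_self ht]⟩
  -- `H` lies in the `p ^ t`-torsion, which has at most `p ^ t` elements as `ZMod (p ^ n)` is
  -- cyclic; hence `H` is that torsion subgroup, which contains `p ^ (n - t)`.
  have hsub : (H : Set (ZMod (p ^ n))).toFinset ⊆ ({a | p ^ t • a = 0} : Finset _) :=
    fun h hh => by
      rw [Set.mem_toFinset] at hh
      exact mem_filter.2
        ⟨mem_univ _, addOrderOf_dvd_iff_nsmul_eq_zero.1 (hcard ▸ H.addOrderOf_dvd_natCard hh)⟩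
  have hS := eq_of_subset_of_card_le hsub (by
    rw [← Nat.card_eq_card_toFinset, SetLike.coe_sort_coe, hcard]
    exact IsAddCyclic.card_nsmul_eq_zero_le (pow_pos hp.pos t))
  have hmem : ((p ^ (n - t) : ℕ) : ZMod (p ^ n)) ∈ ({a | p ^ t • a = 0} : Finset _) := by
    rw [mem_filter, nsmul_eq_mul, ← Nat.cast_mul, ← pow_add, Nat.add_sub_cancel' ht,
      ZMod.natCast_self]
    exact ⟨mem_univ _, rfl⟩
  rw [← hS, Set.mem_toFinset] at hmem
  exact hmem

namespace AddAction

variable (G : Type*) {X : Type*} [AddGroup G] [AddAction G X]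

open scoped Classical in
noncomputable def orbitRepWeight (f : X → ℤ) (x : X) : ℤ :=
  if (Quotient.mk (orbitRel G X) x).out = x then f x / Nat.card (stabilizer G x) else 0

variable {G}

theorem sum_orbitRepWeight_vadd [Fintype G] {f : X → ℤ} (hf : ∀ (g : G) x, f (g +ᵥ x) = f x)
    (hdvd : ∀ x, (Nat.card (stabilizer G x) : ℤ) ∣ f x) (x : X) :
    ∑ g : G, orbitRepWeight G f (g +ᵥ x) = f x := by
  classical
  set r := (Quotient.mk (orbitRel G X) x).out
  obtain ⟨h, hh : h +ᵥ x = r⟩ : r ∈ orbit G x := Quotient.mk_out (s := orbitRel G X) x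
  have hrep : ∀ g : G, (Quotient.mk (orbitRel G X) (g +ᵥ r)).out = r := fun g => by
    have := congrArg Quotient.out (Quotient.sound (s := orbitRel G X) (mem_orbit x (g + h)))
    rwa [add_vadd, hh] at this
  calc ∑ g : G, orbitRepWeight G f (g +ᵥ x) = ∑ g : G, orbitRepWeight G f ((g + h) +ᵥ x) :=
        (Equiv.sum_comp (Equiv.addRight h) _).symm
    _ = ∑ g : G, if g ∈ stabilizer G r then f r / Nat.card (stabilizer G r) else 0 :=
        sum_congr rfl fun g _ => by
          rw [add_vadd, hh, orbitRepWeight, hrep]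
          by_cases hg : g +ᵥ r = r
          · simp [hg]
          · simp [hg, Ne.symm hg]
    _ = Nat.card (stabilizer G r) * (f r / Nat.card (stabilizer G r)) := by
        rw [sum_ite, sum_const, sum_const_zero, add_zero, nsmul_eq_mul, Nat.card_eq_fintype_card,
          Fintype.card_subtype]
    _ = f x := by rw [Int.mul_ediv_cancel' (hdvd r), ← hh, hf]

end AddAction

namespace CyclicWord

variable {α : Type*}

section Extend

variable {m N : ℕ}

def extend (h : m ∣ N) (v : ZMod m → α) : ZMod N → α := v ∘ ZMod.castHom h (ZMod m)

theorem extend_extend {n : ℕ} (h₁ : m ∣ n) (h₂ : n ∣ N) (v : ZMod m → α) :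
    extend h₂ (extend h₁ v) = extend (h₁.trans h₂) v := by
  rw [extend, extend, extend, comp_assoc, ← RingHom.coe_comp, ZMod.castHom_comp]

theorem extend_injective (h : m ∣ N) : Injective (extend h : (ZMod m → α) → ZMod N → α) :=
  (ZMod.castHom_surjective h).injective_comp_right

theorem vadd_extend (h : m ∣ N) (s : ZMod N) (v : ZMod m → α) :
    s +ᵥ extend h v = extend h (ZMod.castHom h (ZMod m) s +ᵥ v) := by
  ext x
  change v (ZMod.castHom h (ZMod m) (-s + x)) = v (-ZMod.castHom h (ZMod m) s + _)
  rw [map_add, map_neg]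

theorem natCast_vadd_extend (h : m ∣ N) (v : ZMod m → α) :
    (m : ZMod N) +ᵥ extend h v = extend h v := by
  rw [vadd_extend, map_natCast, ZMod.natCast_self, zero_vadd]

theorem const_eq_vadd_iff {G : Type*} [AddGroup G] (s : G) (u : G → α) (a : α) :
    const G a = s +ᵥ u ↔ const G a = u :=
  vadd_left_cancel_iff s (x := const G a)

theorem extend_const (h : m ∣ N) (a : α) : extend h (const _ a) = const _ a := rfl

theorem const_eq_extend_iff (h : m ∣ N) (v : ZMod m → α) (a : α) :
    const _ a = extend h v ↔ const _ a = v := by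
  rw [eq_comm, (extend_injective h).eq_iff' (extend_const h a), eq_comm]

theorem apply_add_of_mem_stabilizer {G : Type*} [AddGroup G] {u : G → α} {s : G}
    (hs : s ∈ AddAction.stabilizer G u) (y : G) : u (s + y) = u y := by
  have := congrFun (AddAction.mem_stabilizer_iff.1 hs) (s + y)
  change u (-s + (s + y)) = u (s + y) at this
  rwa [neg_add_cancel_left, eq_comm] at this

theorem exists_extend_eq (h : m ∣ N) [NeZero N] {u : ZMod N → α}
    (hu : (m : ZMod N) ∈ AddAction.stabilizer (ZMod N) u) : ∃ v, extend h v = u := by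
  refine ⟨fun y => u y.val, funext fun x => ?_⟩
  have hx : x = (x.val / m) • (m : ZMod N) + ((ZMod.castHom h (ZMod m) x).val : ZMod N) := by
    rw [ZMod.castHom_apply, ZMod.cast_eq_val, ZMod.val_natCast, nsmul_eq_mul, ← Nat.cast_mul,
      ← Nat.cast_add, mul_comm, Nat.div_add_mod, ZMod.natCast_zmod_val]
  conv_rhs => rw [hx]
  exact (apply_add_of_mem_stabilizer (AddSubgroup.nsmul_mem _ hu _) _).symm

end Extend

section Blocks

variable {p : ℕ}

theorem natCast_mod_pow_mul_pow {i n : ℕ} (hin : i ≤ n) (a : ℕ) :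
    (((a % p ^ (n - i)) * p ^ i : ℕ) : ZMod (p ^ n)) = ((a * p ^ i : ℕ) : ZMod (p ^ n)) := by
  rw [ZMod.natCast_eq_natCast_iff]
  have := (Nat.mod_modEq a (p ^ (n - i))).mul_right' (p ^ i)
  rwa [← pow_add, Nat.sub_add_cancel hin] at this

variable [NeZero p]

variable (p) in
def block (i n : ℕ) (u : ZMod (p ^ n) → α) (l : ZMod (p ^ (n - i))) : ZMod (p ^ i) → α :=
  fun x => u (l.val * p ^ i + x.val : ℕ)

variable (p) in
def concatBlocks (i n : ℕ) (g : ZMod (p ^ (n - i)) → ZMod (p ^ i) → α) : ZMod (p ^ n) → α :=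
  fun x => g (x.val / p ^ i : ℕ) (x.val : ℕ)

theorem concatBlocks_block {i n : ℕ} (hin : i ≤ n) (u : ZMod (p ^ n) → α) :
    concatBlocks p i n (block p i n u) = u := by
  ext x
  simp only [concatBlocks, block, ZMod.val_natCast, Nat.cast_add, natCast_mod_pow_mul_pow hin]
  rw [← Nat.cast_add, Nat.div_add_mod', ZMod.natCast_zmod_val]

theorem val_mul_pow_add_val_lt {i n : ℕ} (hin : i ≤ n) (l : ZMod (p ^ (n - i)))
    (x : ZMod (p ^ i)) : l.val * p ^ i + x.val < p ^ n :=
  calc l.val * p ^ i + x.val < (l.val + 1) * p ^ i := by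
        rw [add_mul, one_mul]; exact Nat.add_lt_add_left x.val_lt _
    _ ≤ p ^ (n - i) * p ^ i := Nat.mul_le_mul_right _ l.val_lt
    _ = p ^ n := by rw [← pow_add, Nat.sub_add_cancel hin]

theorem block_concatBlocks {i n : ℕ} (hin : i ≤ n) (g : ZMod (p ^ (n - i)) → ZMod (p ^ i) → α) :
    block p i n (concatBlocks p i n g) = g := by
  ext l x
  simp only [block, concatBlocks, ZMod.val_cast_of_lt (val_mul_pow_add_val_lt hin l x)]
  rw [add_comm, Nat.add_mul_div_right _ _ (Nat.pos_of_neZero _), Nat.div_eq_of_lt x.val_lt,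
    zero_add, ZMod.natCast_zmod_val]
  simp

theorem block_extend {i m n : ℕ} (him : i ≤ m) (hmn : m ≤ n) (v : ZMod (p ^ m) → α)
    (l : ZMod (p ^ (n - i))) :
    block p i n (extend (pow_dvd_pow p hmn) v) l =
      block p i m v (ZMod.castHom (pow_dvd_pow p (Nat.sub_le_sub_right hmn i)) _ l) := by
  ext x
  simp only [block, extend, comp_apply, map_natCast]
  rw [ZMod.castHom_apply, ZMod.cast_eq_val, ZMod.val_natCast, Nat.cast_add, Nat.cast_add,
    natCast_mod_pow_mul_pow him]

theorem block_vadd {i n : ℕ} (hin : i ≤ n) (u : ZMod (p ^ n) → α) (l : ZMod (p ^ (n - i))) :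
    block p i n (((p ^ i : ℕ) : ZMod (p ^ n)) +ᵥ u) (l + 1) = block p i n u l := by
  ext x
  change u (-((p ^ i : ℕ) : ZMod (p ^ n)) + (((l + 1).val * p ^ i + x.val : ℕ) : ZMod _)) = _
  have hl : (l + 1).val = (l.val + 1) % p ^ (n - i) := by
    rw [← ZMod.val_natCast, Nat.cast_add, ZMod.natCast_zmod_val, Nat.cast_one]
  rw [hl, Nat.cast_add, natCast_mod_pow_mul_pow hin, block]
  push_cast
  ring_nf

variable {M : Type*} [CommMonoid M]

variable (p) in
def blockProd (i n : ℕ) (c : (ZMod (p ^ i) → α) → M) (u : ZMod (p ^ n) → α) : M :=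
  ∏ l, c (block p i n u l)

theorem tensorPow_apply {i n : ℕ} (hin : i ≤ n) (c : tensorPowerOfRankTwo (p ^ i))
    (u : ZMod (p ^ n) → Fin 2) : tensorPow p i n c u = blockProd p i n c u := by
  classical
  rw [tensorPow, Finsupp.finsetSum_apply, sum_eq_single (block p i n u)]
  · simp only [Finsupp.smul_apply, Finsupp.single_apply, smul_eq_mul]
    rw [if_pos (by exact concatBlocks_block hin u), mul_one, blockProd]
  · intro g _ hg
    simp only [Finsupp.smul_apply, Finsupp.single_apply, smul_eq_mul]
    rw [if_neg, mul_zero]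
    intro h
    exact hg (by rw [← block_concatBlocks hin g]; exact congrArg (block p i n) h)
  · simp

theorem blockProd_self {n : ℕ} (c : (ZMod (p ^ n) → α) → M) (u : ZMod (p ^ n) → α) :
    blockProd p n n c u = c u := by
  have hblock : ∀ l, block p n n u l = u := fun l => funext fun x => by
    simp [block]
  simp only [blockProd, hblock, prod_const, card_univ, ZMod.card, Nat.sub_self, pow_zero, pow_one]

theorem blockProd_extend {i m n : ℕ} (him : i ≤ m) (hmn : m ≤ n) (c : (ZMod (p ^ i) → α) → M)
    (v : ZMod (p ^ m) → α) :
    blockProd p i n c (extend (pow_dvd_pow p hmn) v) = blockProd p i m c v ^ p ^ (n - m) := by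
  simp only [blockProd, block_extend him hmn]
  rw [ZMod.prod_comp_castHom (f := fun l => c (block p i m v l)),
    Nat.pow_div (by omega) (Nat.pos_of_neZero p)]
  congr 2
  omega

theorem blockProd_vadd {i n : ℕ} (hin : i ≤ n) (c : (ZMod (p ^ i) → α) → M)
    (u : ZMod (p ^ n) → α) : blockProd p i n c (((p ^ i : ℕ) : ZMod (p ^ n)) +ᵥ u) =
      blockProd p i n c u := by
  rw [blockProd, ← Equiv.prod_comp (Equiv.addRight 1)]
  simp only [Equiv.coe_addRight, block_vadd hin, blockProd]

end Blocks

theorem cyclicRotate_apply (N j : ℕ) (X : tensorPowerOfRankTwo N) (u : ZMod N → Fin 2) :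
    cyclicRotate N j X u = X ((j : ZMod N) +ᵥ u) := by
  have hinj : Injective fun (w : ZMod N → Fin 2) x => w (x + (j : ZMod N)) :=
    fun w w' h => funext fun x => by simpa using congrFun h (x - j)
  have hu : u = (fun (w : ZMod N → Fin 2) x => w (x + (j : ZMod N))) ((j : ZMod N) +ᵥ u) := by
    funext x
    change u x = u (-(j : ZMod N) + (x + j))
    rw [add_comm x, neg_add_cancel_left]
  conv_lhs => rw [hu]
  exact Finsupp.mapDomain_apply hinj X _

section Decomposition

variable {p : ℕ} [NeZero p]

-- The coefficient at `u` of `∑ j < p ^ i, σ^j (c^{⊗p^(n-i)})`.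
variable (p) in
def rotSum (i n : ℕ) (c : (ZMod (p ^ i) → α) → ℤ) (u : ZMod (p ^ n) → α) : ℤ :=
  ∑ j ∈ range (p ^ i), blockProd p i n c ((j : ZMod (p ^ n)) +ᵥ u)

theorem rotSum_vadd {i n : ℕ} (hin : i ≤ n) (c : (ZMod (p ^ i) → α) → ℤ) (s : ZMod (p ^ n))
    (u : ZMod (p ^ n) → α) : rotSum p i n c (s +ᵥ u) = rotSum p i n c u := by
  have hper : Periodic (fun j : ℕ => blockProd p i n c ((j : ZMod (p ^ n)) +ᵥ u)) (p ^ i) :=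
    fun j => by
      dsimp only
      rw [Nat.cast_add, add_comm, add_vadd, blockProd_vadd hin]
  rw [← ZMod.natCast_zmod_val s]
  simp only [rotSum, vadd_vadd, ← Nat.cast_add]
  exact hper.sum_range_add s.val

theorem rotSum_self {n : ℕ} (c : (ZMod (p ^ n) → α) → ℤ) (u : ZMod (p ^ n) → α) :
    rotSum p n n c u = ∑ s : ZMod (p ^ n), c (s +ᵥ u) := by
  simp only [rotSum, blockProd_self]
  exact ZMod.sum_range_natCast _ fun s => c (s +ᵥ u)

theorem rotSum_extend_of_le {i k n : ℕ} (hik : i ≤ k) (hkn : k ≤ n) (c : (ZMod (p ^ i) → α) → ℤ)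
    (v : ZMod (p ^ k) → α) :
    rotSum p i n c (extend (pow_dvd_pow p hkn) v) =
      ∑ j ∈ range (p ^ i), blockProd p i k c ((j : ZMod (p ^ k)) +ᵥ v) ^ p ^ (n - k) :=
  sum_congr rfl fun j _ => by rw [vadd_extend, map_natCast, blockProd_extend hik hkn]

theorem rotSum_extend_of_ge {i k n : ℕ} (hki : k ≤ i) (hin : i ≤ n) (c : (ZMod (p ^ i) → α) → ℤ)
    (v : ZMod (p ^ k) → α) :
    rotSum p i n c (extend (pow_dvd_pow p (hki.trans hin)) v) =
      p ^ (i - k) * ∑ j ∈ range (p ^ k),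
        c ((j : ZMod (p ^ i)) +ᵥ extend (pow_dvd_pow p hki) v) ^ p ^ (n - i) := by
  rw [← extend_extend (pow_dvd_pow p hki) (pow_dvd_pow p hin), rotSum_extend_of_le le_rfl hin]
  simp only [blockProd_self]
  have hper : Periodic (fun j : ℕ =>
      c ((j : ZMod (p ^ i)) +ᵥ extend (pow_dvd_pow p hki) v) ^ p ^ (n - i)) (p ^ k) := fun j => by
    dsimp only
    rw [Nat.cast_add, add_vadd, natCast_vadd_extend]
  have hsum := hper.sum_range_mul (p ^ (i - k))
  rw [← pow_add, Nat.sub_add_cancel hki] at hsum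
  rw [hsum, nsmul_eq_mul]
  push_cast
  rfl

theorem pow_dvd_rotSum_extend_sub (hp : p.Prime) {i k n : ℕ} (hin : i ≤ n) (hkn : k ≤ n)
    (c : (ZMod (p ^ i) → α) → ℤ) (v : ZMod (p ^ k) → α) :
    (p : ℤ) ^ (n + 1 - k) ∣ rotSum p i n c (extend (pow_dvd_pow p hkn) v) -
      rotSum p i (n + 1) c (extend (pow_dvd_pow p (hkn.trans (n.le_add_right 1))) v) := by
  rcases le_total i k with hik | hki
  · rw [rotSum_extend_of_le hik hkn, rotSum_extend_of_le hik (hkn.trans (n.le_add_right 1)),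
      ← sum_sub_distrib, Nat.sub_add_comm hkn]
    exact dvd_sum fun j _ => Int.prime_pow_succ_dvd_pow_sub_pow hp _ (n - k)
  · rw [rotSum_extend_of_ge hki hin, rotSum_extend_of_ge hki (hin.trans (n.le_add_right 1)),
      ← mul_sub, ← sum_sub_distrib, show n + 1 - k = (i - k) + (n - i + 1) by omega, pow_add]
    refine mul_dvd_mul dvd_rfl (dvd_sum fun j _ => ?_)
    rw [Nat.sub_add_comm hin]
    exact Int.prime_pow_succ_dvd_pow_sub_pow hp _ (n - i)

variable [Fintype α] [DecidableEq α]

variable (p) in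
def IsDecomposition (c : ∀ i, (ZMod (p ^ i) → α) → ℤ) (n : ℕ) : Prop :=
  ∀ u : ZMod (p ^ n) → α,
    ∑ a, (if const _ a = u then 1 else 0) + ∑ i ∈ Icc 1 n, rotSum p i n (c i) u = 1

-- What `∑ s, c n (s +ᵥ u)` has to be for the identity at level `n`.
variable (p) in
def defect (c : ∀ i, (ZMod (p ^ i) → α) → ℤ) (n : ℕ) (u : ZMod (p ^ n) → α) : ℤ :=
  1 - ∑ a, (if const _ a = u then 1 else 0) - ∑ i ∈ Ico 1 n, rotSum p i n (c i) u

theorem isDecomposition_zero (c : ∀ i, (ZMod (p ^ i) → α) → ℤ) : IsDecomposition p c 0 := by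
  intro u
  have : Subsingleton (ZMod (p ^ 0)) := by rw [pow_zero]; infer_instance
  have hu : ∀ a, const _ a = u ↔ a = u 0 := fun a =>
    ⟨fun h => h ▸ rfl, fun h => funext fun x => by rw [Subsingleton.elim x 0, h]; rfl⟩
  simp only [hu]
  simp

theorem isDecomposition_succ {c : ∀ i, (ZMod (p ^ i) → α) → ℤ} {n : ℕ}
    (h : ∀ u, rotSum p (n + 1) (n + 1) (c (n + 1)) u = defect p c (n + 1) u) :
    IsDecomposition p c (n + 1) := by
  intro u
  rw [← Finset.Ico_add_one_right_eq_Icc, sum_Ico_succ_top (by omega), h, defect]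
  ring

theorem defect_vadd {n : ℕ} (c : ∀ i, (ZMod (p ^ i) → α) → ℤ) (s : ZMod (p ^ n))
    (u : ZMod (p ^ n) → α) : defect p c n (s +ᵥ u) = defect p c n u := by
  simp only [defect, const_eq_vadd_iff]
  congr 1
  exact sum_congr rfl fun i hi => rotSum_vadd (mem_Ico.1 hi).2.le _ _ _

theorem pow_dvd_defect_extend (hp : p.Prime) {c : ∀ i, (ZMod (p ^ i) → α) → ℤ} {n k : ℕ}
    (hc : IsDecomposition p c n) (hkn : k ≤ n) (v : ZMod (p ^ k) → α) :
    (p : ℤ) ^ (n + 1 - k) ∣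
      defect p c (n + 1) (extend (pow_dvd_pow p (hkn.trans (n.le_add_right 1))) v) := by
  have hv := hc (extend (pow_dvd_pow p hkn) v)
  have hdefect : defect p c (n + 1) (extend (pow_dvd_pow p (hkn.trans (n.le_add_right 1))) v) =
      ∑ i ∈ Icc 1 n, (rotSum p i n (c i) (extend (pow_dvd_pow p hkn) v) -
        rotSum p i (n + 1) (c i) (extend (pow_dvd_pow p (hkn.trans (n.le_add_right 1))) v)) := by
    simp only [defect, const_eq_extend_iff] at hv ⊢
    rw [Finset.Ico_add_one_right_eq_Icc, sum_sub_distrib]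
    linarith
  rw [hdefect]
  exact dvd_sum fun i hi => pow_dvd_rotSum_extend_sub hp (mem_Icc.1 hi).2 hkn _ v

theorem card_stabilizer_dvd_defect (hp : p.Prime) {c : ∀ i, (ZMod (p ^ i) → α) → ℤ} {n : ℕ}
    (hc : IsDecomposition p c n) (u : ZMod (p ^ (n + 1)) → α) :
    (Nat.card (AddAction.stabilizer (ZMod (p ^ (n + 1))) u) : ℤ) ∣ defect p c (n + 1) u := by
  obtain ⟨k, hk, hmem, hcard⟩ :=
    AddSubgroup.exists_prime_pow_mem_card_eq hp (AddAction.stabilizer (ZMod (p ^ (n + 1))) u)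
  obtain ⟨v, rfl⟩ := exists_extend_eq (pow_dvd_pow p hk) hmem
  rw [hcard, Nat.cast_pow]
  rcases hk.lt_or_eq with hk | rfl
  · exact pow_dvd_defect_extend hp hc (Nat.le_of_lt_succ hk) v
  · simp

variable (α p) in
noncomputable def coeff : ∀ n, (ZMod (p ^ n) → α) → ℤ
  | n => AddAction.orbitRepWeight (ZMod (p ^ n))
      (defect p (fun i => if _ : i < n then coeff i else 0) n)

theorem coeff_eq (n : ℕ) :
    coeff α p n = AddAction.orbitRepWeight (ZMod (p ^ n)) (defect p (coeff α p) n) := by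
  rw [coeff]
  congr 1
  ext u
  simp only [defect]
  congr 1
  exact sum_congr rfl fun i hi => by rw [dif_pos (mem_Ico.1 hi).2]

theorem isDecomposition_coeff (hp : p.Prime) (n : ℕ) : IsDecomposition p (coeff α p) n := by
  induction n with
  | zero => exact isDecomposition_zero _
  | succ n ih =>
    refine isDecomposition_succ fun u => ?_
    rw [rotSum_self, coeff_eq]
    exact AddAction.sum_orbitRepWeight_vadd (defect_vadd _) (card_stabilizer_dvd_defect hp ih) u

end Decomposition

end CyclicWord

open CyclicWord

/-- In `M = Z[s₀,s₁]`, there exist elements `c_i ∈ M^{⊗p^i}`, `i ≥ 1`, such that for every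
`n ≥ 1`, `(s₀+s₁)^{⊗p^n} = s₀^{⊗p^n} + s₁^{⊗p^n} + ∑_{i=1}^{n} ∑_{j=0}^{p^i−1}
σ^j (c_i^{⊗p^{n−i}})` in `M^{⊗p^n}` (everything written in the word model, where
`(s₀+s₁)^{⊗p^n}` is the sum of all words of length `p^n`). -/
theorem stmt_12 (p : ℕ) (hp : p.Prime) [∀ j : ℕ, NeZero (p ^ j)] :
    ∃ c : ∀ i : ℕ, tensorPowerOfRankTwo (p ^ i),
      ∀ n : ℕ, 1 ≤ n →
        (∑ w : ZMod (p ^ n) → Fin 2, Finsupp.single w (1 : ℤ) :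
            tensorPowerOfRankTwo (p ^ n))
          = Finsupp.single (fun _ => (0 : Fin 2)) 1 + Finsupp.single (fun _ => (1 : Fin 2)) 1
            + ∑ i ∈ Finset.Icc 1 n, ∑ j ∈ Finset.range (p ^ i),
                cyclicRotate (p ^ n) j (tensorPow p i n (c i)) := by
  have : NeZero p := ⟨hp.ne_zero⟩
  refine ⟨fun i => Finsupp.equivFunOnFinite.symm (coeff (Fin 2) p i), fun n _ => ?_⟩
  ext u
  have hrot : ∀ i ∈ Icc 1 n, ∑ j ∈ range (p ^ i), cyclicRotate (p ^ n) j
      (tensorPow p i n (Finsupp.equivFunOnFinite.symm (coeff (Fin 2) p i))) u =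
        rotSum p i n (coeff (Fin 2) p i) u := fun i hi => by
    simp only [cyclicRotate_apply, tensorPow_apply (mem_Icc.1 hi).2]
    rfl
  have h := isDecomposition_coeff hp n u
  rw [Fin.sum_univ_two] at h
  simp only [Finsupp.add_apply, Finsupp.finsetSum_apply, Finsupp.single_apply, sum_ite_eq',
    mem_univ, if_true]
  rw [sum_congr rfl hrot]
  exact h.symm
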